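/- Every nested involution w in S_n has steady-state time at most 1; that is, BB^1(w) is in steady state. -/

import Mathlib

open scoped Classical

/-- A box-ball system configuration with `n` balls: each of `1,...,n` appears exactly once,
and every entry is either a ball (a value in `1..n`) or an empty box `e = n+1`. -/
def IsBBSConfig (n : ℕ) (X : ℤ → ℕ) : Prop :=
  (∀ k : ℕ, 1 ≤ k → k ≤ n → ∃! j : ℤ, X j = k) ∧
  ∀ j : ℤ, X j = n + 1 ∨ (1 ≤ X j ∧ X j ≤ n)

/-- The position of ball `k` in the configuration `X`. -/
noncomputable def pos (X : ℤ → ℕ) (k : ℕ) : ℤ :=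
  Classical.epsilon fun j => X j = k

/-- The nearest empty box strictly to the right of position `p`. -/
noncomputable def jumpTarget (n : ℕ) (X : ℤ → ℕ) (p : ℤ) : ℤ :=
  Classical.epsilon fun q => p < q ∧ X q = n + 1 ∧ ∀ r : ℤ, p < r → X r = n + 1 → q ≤ r

/-- Ball `k` jumps to the nearest empty box to its right. -/
noncomputable def moveBall (n k : ℕ) (X : ℤ → ℕ) : ℤ → ℕ := fun j =>
  if j = jumpTarget n X (pos X k) then k
  else if j = pos X k then n + 1
  else X j

/-- One box-ball move: the balls `1,...,n` jump, in increasing order of label. -/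
noncomputable def BBMove (n : ℕ) (X : ℤ → ℕ) : ℤ → ℕ :=
  (List.range n).foldl (fun Y k => moveBall n (k + 1) Y) X

/-- The result of applying `t` box-ball moves to `X`. -/
noncomputable def BB (n t : ℕ) (X : ℤ → ℕ) : ℤ → ℕ := (BBMove n)^[t] X

/-- The configuration of a permutation `w`: the one-line notation of `w` (with values `1..n`)
is placed in boxes `1,...,n`, and all other boxes are empty. -/
def configOfPerm (n : ℕ) (w : Equiv.Perm (Fin n)) : ℤ → ℕ := fun j =>
  if h : 1 ≤ j ∧ j ≤ (n : ℤ) then ((w ⟨j.toNat - 1, by omega⟩ : Fin n) : ℕ) + 1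
  else n + 1

/-- `[a,b]` is a maximal contiguous increasing nonempty run of balls in `X`. -/
def IsRun (n : ℕ) (X : ℤ → ℕ) (a b : ℤ) : Prop :=
  a ≤ b ∧ (∀ j : ℤ, a ≤ j → j ≤ b → 1 ≤ X j ∧ X j ≤ n) ∧
  (∀ j : ℤ, a ≤ j → j < b → X j < X (j + 1)) ∧
  X a < X (a - 1) ∧ (X (b + 1) = n + 1 ∨ X (b + 1) < X b)

/-- The run `[a,b]` of `X` is a soliton: it is preserved (as a run, with the same ball values
in the same order) by all subsequent box-ball moves. -/
def IsSoliton (n : ℕ) (X : ℤ → ℕ) (a b : ℤ) : Prop :=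
  IsRun n X a b ∧ ∀ t : ℕ, ∃ a' : ℤ,
    IsRun n (BB n t X) a' (a' + (b - a)) ∧
    ∀ i : ℤ, 0 ≤ i → i ≤ b - a → BB n t X (a' + i) = X (a + i)

/-- A configuration is in steady state when every ball is contained in a soliton. -/
def SteadyState (n : ℕ) (X : ℤ → ℕ) : Prop :=
  ∀ j : ℤ, 1 ≤ X j → X j ≤ n → ∃ a b : ℤ, a ≤ j ∧ j ≤ b ∧ IsSoliton n X a b

/-- The steady-state time of a permutation: the minimal number of box-ball moves needed
for its configuration to reach steady state. -/
noncomputable def SST (n : ℕ) (w : Equiv.Perm (Fin n)) : ℕ :=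
  sInf {t : ℕ | SteadyState n (BB n t (configOfPerm n w))}

/-- The list of positions of the balls of `X`, from left to right. -/
noncomputable def ballPosList (n : ℕ) (X : ℤ → ℕ) : List ℤ :=
  ((Finset.Icc 1 n).image (pos X)).sort (· ≤ ·)

/-- Split a (left-to-right) list of ball positions into maximal blocks of contiguous positions
carrying increasing values: the increasing runs, from leftmost to rightmost. -/
def splitRuns (X : ℤ → ℕ) : List ℤ → List (List ℤ)
  | [] => []
  | [p] => [[p]]
  | p :: q :: ps =>
    match splitRuns X (q :: ps) with
    | [] => [[p]]
    | r :: rest =>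
      if p + 1 = q ∧ X p < X q then (p :: r) :: rest else [p] :: r :: rest

/-- The increasing run decomposition of `X`: the list of its increasing runs (as lists of ball
values), the first row being the rightmost run, the second row the next run to the left, etc. -/
noncomputable def ID (n : ℕ) (X : ℤ → ℕ) : List (List ℕ) :=
  ((splitRuns X (ballPosList n X)).map fun r => r.map X).reverse

/-- The soliton decomposition of a permutation: the increasing run decomposition of its
configuration once it has reached steady state (first row = rightmost soliton). -/
noncomputable def SD (n : ℕ) (w : Equiv.Perm (Fin n)) : List (List ℕ) :=
  ID n (BB n (SST n w) (configOfPerm n w))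

/-- Schensted row insertion of `x` into a row: returns the new row and the bumped entry. -/
def rowInsert (x : ℕ) : List ℕ → List ℕ × Option ℕ
  | [] => ([x], none)
  | y :: ys =>
    if x < y then (x :: ys, some y)
    else
      let p := rowInsert x ys
      (y :: p.1, p.2)

/-- Robinson--Schensted insertion of `x` into a tableau (a list of rows). -/
def insertT : List (List ℕ) → ℕ → List (List ℕ)
  | [], x => [[x]]
  | r :: rest, x =>
    match rowInsert x r with
    | (r', none) => r' :: rest
    | (r', some y) => r' :: insertT rest y

/-- The index of the first row where the second tableau is longer than the first:
the row where a new cell was added. -/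
def growRow : List (List ℕ) → List (List ℕ) → ℕ
  | [], _ => 0
  | _ :: _, [] => 0
  | p :: ps, q :: qs => if p.length < q.length then 0 else growRow ps qs + 1

def addToRow : List (List ℕ) → ℕ → ℕ → List (List ℕ)
  | [], _, i => [[i]]
  | q :: qs, 0, i => (q ++ [i]) :: qs
  | q :: qs, r + 1, i => q :: addToRow qs r i

/-- The pair of Robinson--Schensted tableaux `(P, Q)` of a word. -/
def RSpair (l : List ℕ) : List (List ℕ) × List (List ℕ) :=
  (l.zipIdx.map Prod.swap).foldl
    (fun PQ ix =>
      let P' := insertT PQ.1 ix.2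
      (P', addToRow PQ.2 (growRow PQ.1 P') (ix.1 + 1)))
    ([], [])

/-- The Robinson--Schensted insertion tableau `P(w)` of a word. -/
def RSP (l : List ℕ) : List (List ℕ) := (RSpair l).1

/-- The Robinson--Schensted recording tableau `Q(w)` of a word. -/
def RSQ (l : List ℕ) : List (List ℕ) := (RSpair l).2

/-- The one-line notation of a permutation of `Fin n`, as a word with values in `1..n`. -/
def wordOf (n : ℕ) (w : Equiv.Perm (Fin n)) : List ℕ :=
  List.ofFn fun i => (w i : ℕ) + 1

/-- `T` is a standard Young tableau of size `n` (as a list of rows): rows are nonempty and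
weakly decreasing in length, rows and columns strictly increase, and the entries are
exactly `1,...,n`. -/
def IsStandardTableau (n : ℕ) (T : List (List ℕ)) : Prop :=
  (∀ r ∈ T, r ≠ []) ∧
  (∀ r ∈ T, r.Chain' (· < ·)) ∧
  T.Chain' (fun r r' => r'.length ≤ r.length ∧
    ∀ k : ℕ, k < r'.length → r.getD k 0 < r'.getD k 0) ∧
  List.Perm T.flatten (List.range' 1 n)

/-- The column reading word of a tableau: columns are read bottom to top, left to right. -/
def columnWord (T : List (List ℕ)) : List ℕ :=
  (List.range (T.headD []).length).flatMap fun k => (T.filterMap fun r => r[k]?).reverse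

/-- The concatenation of the columns of a tableau, each read top to bottom, left to right. -/
def colsTopDown (T : List (List ℕ)) : List ℕ :=
  (List.range (T.headD []).length).flatMap fun k => T.filterMap fun r => r[k]?

/-- `T` is the column superstandard tableau of its shape: the standard tableau obtained by
filling the columns top to bottom, from left to right, with `1,2,...,n` in order. -/
def IsColumnSuperstandard (n : ℕ) (T : List (List ℕ)) : Prop :=
  IsStandardTableau n T ∧ colsTopDown T = List.range' 1 n

/-- The length of a longest increasing subsequence of a word. -/
noncomputable def incrLen (l : List ℕ) : ℕ :=
  ((l.sublists.filter fun s => decide (s.Chain' (· < ·))).map List.length).foldr max 0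

/-- The number of descents of a word. -/
def desNum (l : List ℕ) : ℕ :=
  ((l.zip l.tail).filter fun p => decide (p.2 < p.1)).length

/-- A noncrossing involution: no pair of its 2-cycles can be written as `(a c)`, `(b d)`
with `a < b < c < d`. -/
def Noncrossing {n : ℕ} (w : Equiv.Perm (Fin n)) : Prop :=
  ¬ ∃ a b c d : Fin n, a < b ∧ b < c ∧ c < d ∧ w a = c ∧ w b = d

/-- A nested involution: every pair of its distinct 2-cycles is a nesting, i.e. can be
written as `(a d)`, `(b c)` with `a < b < c < d`. -/
def Nested {n : ℕ} (w : Equiv.Perm (Fin n)) : Prop :=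
  ∀ a b c d : Fin n, a < c → b < d → w a = c → w b = d → a ≠ b →
    (a < b ∧ d < c) ∨ (b < a ∧ c < d)

/-- `X` and `Y` differ by a dual Knuth relation of the first kind: `X` has the ball values
`k+1, k, k+2` in this relative left-to-right order, and `Y` is obtained from `X` by swapping
the balls `k+1` and `k+2`. -/
def DK1 (n : ℕ) (X Y : ℤ → ℕ) : Prop :=
  ∃ (k : ℕ) (p q r : ℤ), 1 ≤ k ∧ k + 2 ≤ n ∧ p < q ∧ q < r ∧
    X p = k + 1 ∧ X q = k ∧ X r = k + 2 ∧
    Y p = k + 2 ∧ Y r = k + 1 ∧ ∀ j : ℤ, j ≠ p → j ≠ r → Y j = X j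

/-- `X` and `Y` differ by a dual Knuth relation of the second kind: `X` has the ball values
`k, k+2, k+1` in this relative left-to-right order, and `Y` is obtained from `X` by swapping
the balls `k` and `k+1`. -/
def DK2 (n : ℕ) (X Y : ℤ → ℕ) : Prop :=
  ∃ (k : ℕ) (p q r : ℤ), 1 ≤ k ∧ k + 2 ≤ n ∧ p < q ∧ q < r ∧
    X p = k ∧ X q = k + 2 ∧ X r = k + 1 ∧
    Y p = k + 1 ∧ Y r = k ∧ ∀ j : ℤ, j ≠ p → j ≠ r → Y j = X j

/-- `X` and `Y` differ by a dual Knuth relation (of the first or second kind). -/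
def DualKnuth (n : ℕ) (X Y : ℤ → ℕ) : Prop :=
  DK1 n X Y ∨ DK1 n Y X ∨ DK2 n X Y ∨ DK2 n Y X


/-!
Write the nested involution as arcs `(aᵢ dᵢ)` with `a₁ < ⋯ < aₘ < dₘ < ⋯ < d₁`, plus fixed points;
ball `v` starts in box `w v`. In the first move ball `dᵢ` jumps to box `aᵢ + 1`, ball `aᵢ + 1`
jumps to box `dᵢ`, and every other ball jumps past box `n`, where these balls line up as one
increasing block beginning with ball `1`. That every box jumped over is still occupied comes from
nestedness: `w` maps the inside of each arc to itself. Left of the block, the labels now decrease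
from left to right and all exceed `1`. Every later move carries such a configuration to one of the
same shape, each single ball moving one box and the block moving by its length, so the single balls
and the block are solitons.
-/

namespace BoxBall

open Set

noncomputable def configOfPos (n : ℕ) (p : ℕ → ℤ) (j : ℤ) : ℕ :=
  if j ∈ p '' Icc 1 n then Function.invFunOn p (Icc 1 n) j else n + 1

section configOfPos

variable {n v : ℕ} {p q : ℕ → ℤ} {j : ℤ}

theorem configOfPos_eq_iff (hp : InjOn p (Icc 1 n)) (hv : v ∈ Icc 1 n) :
    configOfPos n p j = v ↔ p v = j := by
  constructor
  · rintro rfl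
    have hj : j ∈ p '' Icc 1 n := by
      by_contra hj
      simp only [configOfPos, if_neg hj, mem_Icc] at hv
      omega
    simp only [configOfPos, if_pos hj]
    exact Function.invFunOn_eq hj
  · rintro rfl
    rw [configOfPos, if_pos (mem_image_of_mem p hv)]
    exact hp.leftInvOn_invFunOn hv

theorem configOfPos_apply (hp : InjOn p (Icc 1 n)) (hv : v ∈ Icc 1 n) :
    configOfPos n p (p v) = v :=
  (configOfPos_eq_iff hp hv).2 rfl

theorem configOfPos_eq_empty_iff : configOfPos n p j = n + 1 ↔ j ∉ p '' Icc 1 n := by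
  refine ⟨fun h hj => ?_, fun hj => if_neg hj⟩
  have := (Function.invFunOn_mem hj).2
  simp only [configOfPos, if_pos hj] at h
  omega

theorem configOfPos_cases (hp : InjOn p (Icc 1 n)) (j : ℤ) :
    (∃ v ∈ Icc 1 n, p v = j ∧ configOfPos n p j = v) ∨ configOfPos n p j = n + 1 := by
  by_cases hj : j ∈ p '' Icc 1 n
  · obtain ⟨v, hv, rfl⟩ := hj
    exact Or.inl ⟨v, hv, rfl, configOfPos_apply hp hv⟩
  · exact Or.inr (configOfPos_eq_empty_iff.2 hj)

theorem configOfPos_congr (h : ∀ v ∈ Icc 1 n, p v = j ↔ q v = j) :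
    configOfPos n p j = configOfPos n q j := by
  have hpred : (fun v => v ∈ Icc 1 n ∧ p v = j) = fun v => v ∈ Icc 1 n ∧ q v = j := by
    funext v
    exact propext ⟨fun ⟨hv, e⟩ => ⟨hv, (h v hv).1 e⟩, fun ⟨hv, e⟩ => ⟨hv, (h v hv).2 e⟩⟩
  simp only [configOfPos, Function.invFunOn, mem_image, hpred]

end configOfPos

theorem pos_eq {X : ℤ → ℕ} {k : ℕ} {p : ℤ} (h : ∀ j, X j = k ↔ j = p) : pos X k = p :=
  (h _).1 (Classical.epsilon_spec (p := fun j => X j = k) ⟨p, (h p).2 rfl⟩)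

theorem jumpTarget_eq {n : ℕ} {X : ℤ → ℕ} {p q : ℤ} (hpq : p < q) (hq : X q = n + 1)
    (hocc : ∀ r, p < r → r < q → X r ≠ n + 1) : jumpTarget n X p = q := by
  have hspec : p < q ∧ X q = n + 1 ∧ ∀ r, p < r → X r = n + 1 → q ≤ r :=
    ⟨hpq, hq, fun r hr hXr => not_lt.1 fun hrq => hocc r hr hrq hXr⟩
  obtain ⟨h₁, h₂, h₃⟩ := Classical.epsilon_spec (p := fun q => p < q ∧ X q = n + 1 ∧
    ∀ r, p < r → X r = n + 1 → q ≤ r) ⟨q, hspec⟩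
  exact le_antisymm (h₃ q hpq hq) (hspec.2.2 _ h₁ h₂)

-- Ball-by-ball conditions for one move to take ball `v` from box `p v` to box `q v`: when `v`
-- moves, every ball `u < v` is already in box `q u` and every ball `u > v` is still in box `p u`.
structure IsMoveStep (n : ℕ) (p q : ℕ → ℤ) : Prop where
  injOn_left : InjOn p (Icc 1 n)
  injOn_right : InjOn q (Icc 1 n)
  lt : ∀ v ∈ Icc 1 n, p v < q v
  ne : ∀ u ∈ Icc 1 n, ∀ v ∈ Icc 1 n, v < u → q v ≠ p u
  exists_of_mem_Ioo : ∀ v ∈ Icc 1 n, ∀ j ∈ Ioo (p v) (q v),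
    ∃ u ∈ Icc 1 n, (u < v ∧ q u = j) ∨ (v < u ∧ p u = j)

namespace IsMoveStep

variable {n : ℕ} {p q : ℕ → ℤ}

def movedUpTo (p q : ℕ → ℤ) (k v : ℕ) : ℤ := if v ≤ k then q v else p v

theorem injOn_movedUpTo (h : IsMoveStep n p q) (k : ℕ) :
    InjOn (movedUpTo p q k) (Icc 1 n) := by
  intro u hu v hv huv
  simp only [movedUpTo] at huv
  split_ifs at huv with hu' hv' hv'
  · exact h.injOn_right hu hv huv
  · exact absurd huv (h.ne v hv u hu (by omega))
  · exact absurd huv.symm (h.ne u hu v hv (by omega))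
  · exact h.injOn_left hu hv huv

theorem pos_movedUpTo (h : IsMoveStep n p q) {k : ℕ} (hk : k < n) :
    pos (configOfPos n (movedUpTo p q k)) (k + 1) = p (k + 1) :=
  pos_eq fun j => by
    rw [configOfPos_eq_iff (h.injOn_movedUpTo k) ⟨by omega, by omega⟩, movedUpTo,
      if_neg (by omega), eq_comm]

theorem jumpTarget_movedUpTo (h : IsMoveStep n p q) {k : ℕ} (hk : k < n) :
    jumpTarget n (configOfPos n (movedUpTo p q k)) (p (k + 1)) = q (k + 1) := by
  have hk' : k + 1 ∈ Icc 1 n := ⟨by omega, by omega⟩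
  refine jumpTarget_eq (h.lt _ hk') (configOfPos_eq_empty_iff.2 ?_) fun r hr hrq => ?_
  · rintro ⟨u, hu, hqu⟩
    simp only [movedUpTo] at hqu
    split_ifs at hqu with huk
    · exact absurd (h.injOn_right hu hk' hqu) (by omega)
    · obtain rfl | hlt := eq_or_lt_of_le (show k + 1 ≤ u by omega)
      · exact (h.lt _ hu).ne hqu
      · exact h.ne u hu _ hk' hlt hqu.symm
  · rw [Ne, configOfPos_eq_empty_iff, not_not]
    obtain ⟨u, hu, ⟨hlt, hqu⟩ | ⟨hlt, hpu⟩⟩ := h.exists_of_mem_Ioo _ hk' r ⟨hr, hrq⟩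
    · exact ⟨u, hu, by rw [← hqu]; exact if_pos (by omega)⟩
    · exact ⟨u, hu, by rw [← hpu]; exact if_neg (by omega)⟩

theorem moveBall_movedUpTo (h : IsMoveStep n p q) {k : ℕ} (hk : k < n) :
    moveBall n (k + 1) (configOfPos n (movedUpTo p q k)) =
      configOfPos n (movedUpTo p q (k + 1)) := by
  have hk' : k + 1 ∈ Icc 1 n := ⟨by omega, by omega⟩
  funext j
  simp only [moveBall, h.pos_movedUpTo hk, h.jumpTarget_movedUpTo hk]
  split_ifs with hjq hjp
  · have hqk : movedUpTo p q (k + 1) (k + 1) = q (k + 1) := if_pos le_rfl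
    rw [hjq, ← hqk, configOfPos_apply (h.injOn_movedUpTo _) hk']
  · symm
    rw [configOfPos_eq_empty_iff]
    rintro ⟨u, hu, hpu⟩
    subst hjp
    simp only [movedUpTo] at hpu
    split_ifs at hpu with huk
    · obtain rfl | hlt := eq_or_lt_of_le huk
      · exact hjq hpu.symm
      · exact h.ne _ hk' u hu (by omega) hpu
    · exact absurd (h.injOn_left hu hk' hpu) (by omega)
  · refine configOfPos_congr fun u hu => ?_
    simp only [movedUpTo]
    rcases lt_trichotomy u (k + 1) with hlt | rfl | hgt
    · rw [if_pos (by omega), if_pos (by omega)]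
    · rw [if_neg (by omega), if_pos le_rfl]
      exact ⟨fun e => absurd e.symm hjp, fun e => absurd e.symm hjq⟩
    · rw [if_neg (by omega), if_neg (by omega)]

theorem BBMove_eq (h : IsMoveStep n p q) : BBMove n (configOfPos n p) = configOfPos n q := by
  have hfold : ∀ m ≤ n, (List.range m).foldl (fun Y k => moveBall n (k + 1) Y)
      (configOfPos n p) = configOfPos n (movedUpTo p q m) := by
    intro m hm
    induction m with
    | zero =>
      refine funext fun j => configOfPos_congr fun v hv => ?_
      rw [movedUpTo, if_neg (by have := hv.1; omega)]
    | succ m ih =>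
      rw [List.range_succ, List.foldl_append, ih (by omega)]
      exact h.moveBall_movedUpTo (by omega)
  rw [BBMove, hfold n le_rfl]
  exact funext fun j => configOfPos_congr fun v hv => by rw [movedUpTo, if_pos hv.2]

end IsMoveStep

def rank (R : Finset ℕ) (v : ℕ) : ℕ := (R.filter (· ≤ v)).card

section rank

variable {R : Finset ℕ} {u v : ℕ}

theorem rank_pos (hv : v ∈ R) : 0 < rank R v :=
  Finset.card_pos.2 ⟨v, Finset.mem_filter.2 ⟨hv, le_rfl⟩⟩

theorem rank_le_card : rank R v ≤ R.card :=
  Finset.card_le_card (Finset.filter_subset _ _)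

theorem rank_lt_rank (hv : v ∈ R) : rank R u < rank R v ↔ u < v := by
  refine ⟨fun h => not_le.1 fun hvu => h.not_ge ?_, fun h => Finset.card_lt_card ?_⟩
  · exact Finset.card_le_card (Finset.monotone_filter_right _ fun x _ hx => hx.trans hvu)
  · refine Finset.ssubset_iff_of_subset
      (Finset.monotone_filter_right _ fun x _ hx => hx.trans h.le) |>.2 ⟨v, ?_, ?_⟩
    · exact Finset.mem_filter.2 ⟨hv, le_rfl⟩
    · simp [h]

theorem rank_injOn : InjOn (rank R) R := fun u hu v hv huv => by
  by_contra hne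
  rcases lt_or_gt_of_ne hne with h | h
  · exact ((rank_lt_rank hv).2 h).ne huv
  · exact ((rank_lt_rank hu).2 h).ne' huv

theorem exists_rank_eq {r : ℕ} (hr : 0 < r) (hrR : r ≤ R.card) : ∃ u ∈ R, rank R u = r := by
  obtain ⟨u, hu, hur⟩ := Finset.surj_on_of_inj_on_of_card_le (t := Finset.Icc 1 R.card)
    (fun u _ => rank R u) (fun u hu => Finset.mem_Icc.2 ⟨rank_pos hu, rank_le_card⟩)
    (fun u v hu hv => rank_injOn hu hv) (by simp) r (Finset.mem_Icc.2 ⟨hr, hrR⟩)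
  exact ⟨u, hu, hur.symm⟩

theorem le_of_rank_eq_one (hu : u ∈ R) (hu1 : rank R u = 1) (hv : v ∈ R) : u ≤ v :=
  not_lt.1 fun hvu => by have := (rank_lt_rank hu).2 hvu; have := rank_pos hv; omega

end rank

def blockPos (R : Finset ℕ) (N : ℤ) (p : ℕ → ℤ) (v : ℕ) : ℤ :=
  if v ∈ R then N + rank R v else p v

structure SinglesThenBlock (n : ℕ) (R : Finset ℕ) (N : ℤ) (p : ℕ → ℤ) : Prop where
  subset : R ⊆ Finset.Icc 1 n
  le : ∀ v ∈ Icc 1 n, v ∉ R → p v ≤ N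
  anti : ∀ u ∈ Icc 1 n, ∀ v ∈ Icc 1 n, u ∉ R → v ∉ R → u < v → p v < p u
  exists_lt : ∀ v ∈ Icc 1 n, v ∉ R → ∃ u ∈ R, u < v

namespace SinglesThenBlock

variable {n : ℕ} {R : Finset ℕ} {N : ℤ} {p : ℕ → ℤ} {u v : ℕ}

theorem mem_Icc (h : SinglesThenBlock n R N p) (hv : v ∈ R) : v ∈ Icc 1 n := by
  simpa using h.subset hv

theorem lt_of_lt_apply (h : SinglesThenBlock n R N p) (hu : u ∈ Icc 1 n) (hv : v ∈ Icc 1 n)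
    (huR : u ∉ R) (hvR : v ∉ R) (huv : p u < p v) : v < u := by
  rcases lt_trichotomy u v with hlt | rfl | hgt
  · exact absurd (h.anti u hu v hv huR hvR hlt) huv.not_gt
  · exact absurd huv (lt_irrefl _)
  · exact hgt

theorem card_pos (h : SinglesThenBlock n R N p) (hv : v ∈ Icc 1 n) (hvR : v ∉ R) :
    0 < R.card := by
  obtain ⟨u, hu, -⟩ := h.exists_lt v hv hvR
  exact Finset.card_pos.2 ⟨u, hu⟩

theorem lt_of_rank_eq_one (h : SinglesThenBlock n R N p) (hu : u ∈ R) (hu1 : rank R u = 1)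
    (hv : v ∈ Icc 1 n) (hvR : v ∉ R) : u < v := by
  obtain ⟨u', hu', hu'v⟩ := h.exists_lt v hv hvR
  exact (le_of_rank_eq_one hu hu1 hu').trans_lt hu'v

theorem injOn (h : SinglesThenBlock n R N p) : InjOn (blockPos R N p) (Icc 1 n) := by
  intro u hu v hv huv
  simp only [blockPos] at huv
  split_ifs at huv with huR hvR hvR
  · exact rank_injOn huR hvR (by omega)
  · have := rank_pos huR; have := h.le v hv hvR; omega
  · have := rank_pos hvR; have := h.le u hu huR; omega
  · by_contra hne
    rcases lt_or_gt_of_ne hne with hlt | hlt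
    · exact (h.anti u hu v hv huR hvR hlt).ne huv.symm
    · exact (h.anti v hv u hu hvR huR hlt).ne huv

theorem shift (h : SinglesThenBlock n R N p) (t : ℕ) :
    SinglesThenBlock n R (N + t * R.card) (fun v => p v + t) where
  subset := h.subset
  le v hv hvR := by
    have := h.le v hv hvR
    have : (t : ℤ) ≤ t * R.card := le_mul_of_one_le_right (by positivity)
      (by exact_mod_cast h.card_pos hv hvR)
    omega
  anti u hu v hv huR hvR huv := by simpa using h.anti u hu v hv huR hvR huv
  exists_lt := h.exists_lt

theorem configOfPos_add_rank (h : SinglesThenBlock n R N p) (hu : u ∈ R) :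
    configOfPos n (blockPos R N p) (N + rank R u) = u := by
  have := configOfPos_apply h.injOn (h.mem_Icc hu)
  rwa [blockPos, if_pos hu] at this

theorem isMoveStep (h : SinglesThenBlock n R N p) :
    IsMoveStep n (blockPos R N p) (blockPos R (N + R.card) (fun v => p v + 1)) where
  injOn_left := h.injOn
  injOn_right := by simpa using (h.shift 1).injOn
  lt v hv := by
    simp only [blockPos]
    split_ifs with hvR
    · have := Finset.card_pos.2 ⟨v, hvR⟩; omega
    · omega
  ne u hu v hv hvu := by
    simp only [blockPos]
    split_ifs with hvR huR huR
    · have := rank_pos hvR; have := rank_le_card (R := R) (v := u); omega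
    · have := rank_pos hvR; have := h.le u hu huR; omega
    · have := rank_pos huR; have := h.le v hv hvR
      have : rank R u ≠ 1 := fun h1 => (h.lt_of_rank_eq_one huR h1 hv hvR).not_gt hvu
      omega
    · have := h.anti v hv u hu hvR huR hvu; omega
  exists_of_mem_Ioo v hv j hj := by
    simp only [blockPos, mem_Ioo] at hj
    split_ifs at hj with hvR
    · have := rank_le_card (R := R) (v := v)
      rcases le_or_gt j (N + R.card) with hjL | hjL
      · obtain ⟨u, huR, hur⟩ :=
          exists_rank_eq (R := R) (r := (j - N).toNat) (by omega) (by omega)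
        refine ⟨u, h.mem_Icc huR, Or.inr ⟨(rank_lt_rank huR).1 (by omega), ?_⟩⟩
        rw [blockPos, if_pos huR, hur]
        omega
      · obtain ⟨u, huR, hur⟩ :=
          exists_rank_eq (R := R) (r := (j - N - R.card).toNat) (by omega) (by omega)
        refine ⟨u, h.mem_Icc huR, Or.inl ⟨(rank_lt_rank hvR).1 (by omega), ?_⟩⟩
        rw [blockPos, if_pos huR, hur]
        omega
    · omega

theorem BB_eq (h : SinglesThenBlock n R N p) (t : ℕ) :
    BB n t (configOfPos n (blockPos R N p)) =
      configOfPos n (blockPos R (N + t * R.card) (fun v => p v + t)) := by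
  induction t with
  | zero => simp [BB]
  | succ t ih =>
    rw [BB, Function.iterate_succ_apply', ← BB, ih, (h.shift t).isMoveStep.BBMove_eq]
    congr 2
    · push_cast; ring
    · funext v; push_cast; ring

theorem exists_mem_of_mem_Ioc (h : SinglesThenBlock n R N p) {j : ℤ}
    (hj : j ∈ Ioc N (N + R.card)) :
    ∃ u ∈ R, N + rank R u = j ∧ configOfPos n (blockPos R N p) j = u := by
  obtain ⟨u, hu, hur⟩ := exists_rank_eq (R := R) (r := (j - N).toNat)
    (by have := hj.1; omega) (by have := hj.2; omega)
  have hj' : N + rank R u = j := by rw [hur]; have := hj.1; omega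
  exact ⟨u, hu, hj', hj' ▸ h.configOfPos_add_rank hu⟩

theorem isRun_single (h : SinglesThenBlock n R N p) (hv : v ∈ Icc 1 n) (hvR : v ∉ R) :
    IsRun n (configOfPos n (blockPos R N p)) (p v) (p v) := by
  have hX : configOfPos n (blockPos R N p) (p v) = v := by
    have := configOfPos_apply h.injOn hv
    rwa [blockPos, if_neg hvR] at this
  have := h.le v hv hvR
  refine ⟨le_rfl, fun j h₁ h₂ => ?_, fun j h₁ h₂ => absurd h₂ (not_lt.2 h₁), ?_, ?_⟩
  · rw [le_antisymm h₂ h₁, hX]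
    exact hv
  · rw [hX]
    rcases configOfPos_cases h.injOn (p v - 1) with ⟨u, hu, hpos, hXu⟩ | hempty
    · rw [hXu]
      simp only [blockPos] at hpos
      split_ifs at hpos with huR
      · have := rank_pos huR; omega
      · exact h.lt_of_lt_apply hu hv huR hvR (by omega)
    · rw [hempty]
      exact Nat.lt_succ_of_le hv.2
  · rw [hX]
    rcases configOfPos_cases h.injOn (p v + 1) with ⟨u, hu, hpos, hXu⟩ | hempty
    · right
      rw [hXu]
      simp only [blockPos] at hpos
      split_ifs at hpos with huR
      · have := rank_pos huR
        exact h.lt_of_rank_eq_one huR (by omega) hv hvR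
      · exact h.lt_of_lt_apply hv hu hvR huR (by omega)
    · exact Or.inl hempty

theorem isRun_block (h : SinglesThenBlock n R N p) (hR : R.Nonempty) :
    IsRun n (configOfPos n (blockPos R N p)) (N + 1) (N + R.card) := by
  have hL : (0 : ℤ) < R.card := by exact_mod_cast hR.card_pos
  obtain ⟨u₁, hu₁, hu₁r, hXu₁⟩ := h.exists_mem_of_mem_Ioc (j := N + 1) ⟨by omega, by omega⟩
  refine ⟨by omega, fun j h₁ h₂ => ?_, fun j h₁ h₂ => ?_, ?_, ?_⟩
  · obtain ⟨u, hu, -, hXu⟩ := h.exists_mem_of_mem_Ioc ⟨h₁, h₂⟩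
    rw [hXu]
    exact h.mem_Icc hu
  · obtain ⟨u, hu, hur, hXu⟩ := h.exists_mem_of_mem_Ioc ⟨h₁, h₂.le⟩
    obtain ⟨u', hu', hur', hXu'⟩ := h.exists_mem_of_mem_Ioc (j := j + 1) ⟨by omega, h₂⟩
    rw [hXu, hXu']
    exact (rank_lt_rank hu').1 (by omega)
  · rw [add_sub_cancel_right, hXu₁]
    rcases configOfPos_cases h.injOn N with ⟨u, hu, hpos, hXu⟩ | hempty
    · rw [hXu]
      simp only [blockPos] at hpos
      split_ifs at hpos with huR
      · have := rank_pos huR; omega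
      · exact h.lt_of_rank_eq_one hu₁ (by omega) hu huR
    · rw [hempty]
      exact Nat.lt_succ_of_le (h.mem_Icc hu₁).2
  · refine Or.inl (configOfPos_eq_empty_iff.2 ?_)
    rintro ⟨u, hu, hpos⟩
    simp only [blockPos] at hpos
    split_ifs at hpos with huR
    · have := rank_le_card (R := R) (v := u); omega
    · have := h.le u hu huR; omega

theorem isSoliton_block (h : SinglesThenBlock n R N p) (hR : R.Nonempty) :
    IsSoliton n (configOfPos n (blockPos R N p)) (N + 1) (N + R.card) := by
  refine ⟨h.isRun_block hR, fun t => ⟨N + t * R.card + 1, ?_, fun i hi₀ hiL => ?_⟩⟩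
  · rw [h.BB_eq, show N + t * R.card + 1 + (N + R.card - (N + 1)) =
      N + t * R.card + R.card by ring]
    exact (h.shift t).isRun_block hR
  · obtain ⟨u, hu, hur, hXu⟩ := h.exists_mem_of_mem_Ioc (j := N + 1 + i) ⟨by omega, by omega⟩
    rw [h.BB_eq, hXu, show N + t * R.card + 1 + i = N + t * R.card + rank R u by omega]
    exact (h.shift t).configOfPos_add_rank hu

theorem isSoliton_single (h : SinglesThenBlock n R N p) (hv : v ∈ Icc 1 n) (hvR : v ∉ R) :
    IsSoliton n (configOfPos n (blockPos R N p)) (p v) (p v) := by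
  have hX (t : ℕ) : BB n t (configOfPos n (blockPos R N p)) (p v + t) = v := by
    have := configOfPos_apply (h.shift t).injOn hv
    rwa [blockPos, if_neg hvR, ← h.BB_eq] at this
  refine ⟨h.isRun_single hv hvR, fun t => ⟨p v + t, ?_, fun i hi₀ hi => ?_⟩⟩
  · rw [h.BB_eq, sub_self, add_zero]
    exact (h.shift t).isRun_single hv hvR
  · obtain rfl : i = 0 := by omega
    simpa [BB] using (hX t).trans (hX 0).symm

theorem steadyState (h : SinglesThenBlock n R N p) :
    SteadyState n (configOfPos n (blockPos R N p)) := by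
  intro j hj₁ hjn
  obtain ⟨v, hv, hpos, -⟩ | hempty := configOfPos_cases h.injOn j
  swap
  · omega
  by_cases hvR : v ∈ R
  · rw [blockPos, if_pos hvR] at hpos
    have := rank_pos hvR
    have := rank_le_card (R := R) (v := v)
    exact ⟨N + 1, N + R.card, by omega, by omega, h.isSoliton_block ⟨v, hvR⟩⟩
  · rw [blockPos, if_neg hvR] at hpos
    exact ⟨p v, p v, hpos.le, hpos.ge, h.isSoliton_single hv hvR⟩

end SinglesThenBlock

structure IsNestedInvolutionOn (n : ℕ) (W : ℕ → ℕ) : Prop where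
  mapsTo : MapsTo W (Icc 1 n) (Icc 1 n)
  involutive : ∀ v ∈ Icc 1 n, W (W v) = v
  nested : ∀ u ∈ Icc 1 n, ∀ v ∈ Icc 1 n, u < W u → v < W v → u < v → W v < W u

def IsAfterOpener (W : ℕ → ℕ) (v : ℕ) : Prop := 2 ≤ v ∧ v - 1 < W (v - 1)

instance (W : ℕ → ℕ) : DecidablePred (IsAfterOpener W) := fun v => by
  unfold IsAfterOpener
  infer_instance

def runBalls (n : ℕ) (W : ℕ → ℕ) : Finset ℕ :=
  (Finset.Icc 1 n).filter fun v => v ≤ W v ∧ ¬ IsAfterOpener W v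

def singlePos (W : ℕ → ℕ) (v : ℕ) : ℤ := if IsAfterOpener W v then W (v - 1) else W v + 1

section runBalls

variable {n : ℕ} {W : ℕ → ℕ} {v : ℕ}

theorem mem_runBalls : v ∈ runBalls n W ↔ v ∈ Icc 1 n ∧ v ≤ W v ∧ ¬ IsAfterOpener W v := by
  simp [runBalls]

theorem apply_lt_of_notMem_runBalls (hv : v ∈ Icc 1 n) (hvR : v ∉ runBalls n W)
    (hv' : ¬ IsAfterOpener W v) : W v < v := by
  by_contra hle
  exact hvR (mem_runBalls.2 ⟨hv, not_lt.1 hle, hv'⟩)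

theorem IsAfterOpener.pred_mem_Icc (hv' : IsAfterOpener W v) (hv : v ∈ Icc 1 n) :
    v - 1 ∈ Icc 1 n :=
  ⟨by have := hv'.1; omega, by have := hv.2; omega⟩

end runBalls

namespace IsNestedInvolutionOn

variable {n : ℕ} {W : ℕ → ℕ} {a b u v : ℕ}

theorem injOn (h : IsNestedInvolutionOn n W) : InjOn W (Icc 1 n) := fun u hu v hv huv => by
  rw [← h.involutive u hu, huv, h.involutive v hv]

theorem lt_apply_of_lt_apply (h : IsNestedInvolutionOn n W) (ha : a ∈ Icc 1 n)
    (hb : b ∈ Icc 1 n) (ha' : a < W a) (hb' : b < W b) : a < W b := by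
  rcases lt_trichotomy a b with hab | rfl | hba
  · omega
  · exact ha'
  · have := h.nested b hb a ha hb' ha' hba
    omega

theorem mapsTo_Ioo (h : IsNestedInvolutionOn n W) (ha : a ∈ Icc 1 n) :
    MapsTo W (Ioo a (W a)) (Ioo a (W a)) := by
  rintro j ⟨haj, hja⟩
  have hj' : j ∈ Icc 1 n := ⟨by have := ha.1; omega, by have := (h.mapsTo ha).2; omega⟩
  have hWj := h.involutive j hj'
  rcases lt_trichotomy j (W j) with hlt | heq | hgt
  · exact ⟨by omega, h.nested a ha j hj' (by omega) hlt haj⟩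
  · exact heq ▸ ⟨haj, hja⟩
  · rcases lt_trichotomy (W j) a with hlt | heq | hgt'
    · have := h.nested (W j) (h.mapsTo hj') a ha (by omega) (by omega) hlt
      omega
    · rw [← heq, hWj] at hja
      omega
    · exact ⟨hgt', by omega⟩

theorem apply_mem_Ico_of_isAfterOpener (h : IsNestedInvolutionOn n W) (hv : v ∈ Icc 1 n)
    (hv' : IsAfterOpener W v) : W v ∈ Ico (v - 1) (W (v - 1)) := by
  have ha := hv'.pred_mem_Icc hv
  rcases eq_or_lt_of_le (show v ≤ W (v - 1) by have := hv'.2; omega) with heq | hlt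
  · have := h.involutive _ ha
    rw [← heq] at this
    exact ⟨this.ge, by have := hv'.2; omega⟩
  · have := h.mapsTo_Ioo ha ⟨by have := hv'.1; omega, hlt⟩
    exact ⟨this.1.le, this.2⟩

theorem singlePos_lt_singlePos (h : IsNestedInvolutionOn n W) (hu : u ∈ Icc 1 n)
    (hv : v ∈ Icc 1 n) (huR : u ∉ runBalls n W) (hvR : v ∉ runBalls n W) (huv : u < v) :
    singlePos W v < singlePos W u := by
  simp only [singlePos]
  split_ifs with hv' hu' hu'
  · exact_mod_cast h.nested _ (hu'.pred_mem_Icc hu) _ (hv'.pred_mem_Icc hv) hu'.2 hv'.2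
      (by have := hu'.1; omega)
  · have hWu := apply_lt_of_notMem_runBalls hu huR hu'
    have := h.lt_apply_of_lt_apply (hv'.pred_mem_Icc hv) (h.mapsTo hu) hv'.2
      (by rw [h.involutive u hu]; exact hWu)
    rw [h.involutive u hu] at this
    omega
  · have hWv := apply_lt_of_notMem_runBalls hv hvR hv'
    have hWWv := h.involutive v hv
    rcases lt_trichotomy (W v) (u - 1) with hlt | heq | hgt
    · have := hu'.2; omega
    · rw [heq] at hWWv; have := hu.1; omega
    · have := h.nested _ (hu'.pred_mem_Icc hu) _ (h.mapsTo hv) hu'.2 (by omega) hgt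
      omega
  · have hWu := apply_lt_of_notMem_runBalls hu huR hu'
    have hWv := apply_lt_of_notMem_runBalls hv hvR hv'
    rcases lt_trichotomy (W u) (W v) with hlt | heq | hgt
    · have := h.nested _ (h.mapsTo hu) _ (h.mapsTo hv)
        (by rw [h.involutive u hu]; exact hWu) (by rw [h.involutive v hv]; exact hWv) hlt
      rw [h.involutive u hu, h.involutive v hv] at this
      omega
    · exact absurd (h.injOn hu hv heq) huv.ne
    · omega

theorem singlesThenBlock (h : IsNestedInvolutionOn n W) :
    SinglesThenBlock n (runBalls n W) n (singlePos W) where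
  subset := Finset.filter_subset _ _
  le v hv hvR := by
    rw [singlePos]
    split_ifs with hv'
    · exact_mod_cast (h.mapsTo (hv'.pred_mem_Icc hv)).2
    · have := apply_lt_of_notMem_runBalls hv hvR hv'
      have := hv.2
      omega
  anti u hu v hv huR hvR huv := h.singlePos_lt_singlePos hu hv huR hvR huv
  exists_lt v hv hvR := by
    have hn : 1 ∈ Icc 1 n := ⟨le_rfl, hv.1.trans hv.2⟩
    have h1 : 1 ∈ runBalls n W :=
      mem_runBalls.2 ⟨hn, (h.mapsTo hn).1, fun h1 => by have := h1.1; omega⟩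
    refine ⟨1, h1, lt_of_le_of_ne hv.1 ?_⟩
    rintro rfl
    exact hvR h1

theorem exists_of_mem_runBalls (h : IsNestedInvolutionOn n W) (hvR : v ∈ runBalls n W) {j : ℤ}
    (hvj : W v < j) (hjv : j < n + rank (runBalls n W) v) :
    ∃ u ∈ Icc 1 n, (u < v ∧ blockPos (runBalls n W) n (singlePos W) u = j) ∨
      (v < u ∧ (W u : ℤ) = j) := by
  obtain ⟨hv, hvWv, hv'⟩ := mem_runBalls.1 hvR
  rcases le_or_gt j n with hjn | hjn
  · lift j to ℕ using (by omega)
    have hj : j ∈ Icc 1 n := ⟨by omega, by omega⟩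
    have hWj := h.involutive j hj
    rcases lt_trichotomy v (W j) with hlt | heq | hgt
    · exact ⟨W j, h.mapsTo hj, Or.inr ⟨hlt, by rw [hWj]⟩⟩
    · rw [heq, hWj] at hvj
      omega
    · have hu : IsAfterOpener W (W j + 1) :=
        ⟨by have := (h.mapsTo hj).1; omega, by rw [Nat.add_sub_cancel, hWj]; omega⟩
      refine ⟨W j + 1, ⟨by omega, by omega⟩, Or.inl ⟨?_, ?_⟩⟩
      · rcases eq_or_lt_of_le (show W j + 1 ≤ v by omega) with heq | hlt
        · exact absurd (heq ▸ hu) hv'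
        · exact hlt
      · rw [blockPos, if_neg fun hR => (mem_runBalls.1 hR).2.2 hu, singlePos, if_pos hu,
          Nat.add_sub_cancel, hWj]
  · have := rank_le_card (R := runBalls n W) (v := v)
    obtain ⟨u, huR, hur⟩ := exists_rank_eq (R := runBalls n W) (r := (j - n).toNat)
      (by omega) (by omega)
    refine ⟨u, (mem_runBalls.1 huR).1, Or.inl ⟨(rank_lt_rank hvR).1 (by omega), ?_⟩⟩
    rw [blockPos, if_pos huR, hur]
    omega

theorem exists_of_isAfterOpener (h : IsNestedInvolutionOn n W) (hv : v ∈ Icc 1 n)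
    (hv' : IsAfterOpener W v) {j : ℤ} (hvj : W v < j) (hjv : j < W (v - 1)) :
    ∃ u ∈ Icc 1 n, v < u ∧ (W u : ℤ) = j := by
  obtain ⟨hle, hlt⟩ := h.apply_mem_Ico_of_isAfterOpener hv hv'
  have ha := hv'.pred_mem_Icc hv
  lift j to ℕ using (by omega)
  have hWj := h.mapsTo_Ioo ha (x := j) ⟨by omega, by exact_mod_cast hjv⟩
  have hj : j ∈ Icc 1 n := ⟨by have := ha.1; omega, by have := (h.mapsTo ha).2; omega⟩
  refine ⟨W j, h.mapsTo hj, ?_, by rw [h.involutive j hj]⟩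
  rcases eq_or_lt_of_le (show v ≤ W j by have := hWj.1; omega) with heq | hlt
  · rw [heq, h.involutive j hj] at hvj
    omega
  · exact hlt

theorem isMoveStep (h : IsNestedInvolutionOn n W) :
    IsMoveStep n (fun v => (W v : ℤ)) (blockPos (runBalls n W) n (singlePos W)) where
  injOn_left u hu v hv huv := h.injOn hu hv (Int.ofNat_inj.1 huv)
  injOn_right := h.singlesThenBlock.injOn
  lt v hv := by
    simp only [blockPos, singlePos]
    split_ifs with hvR hv'
    · have := rank_pos hvR; have := (h.mapsTo hv).2; omega
    · exact_mod_cast (h.apply_mem_Ico_of_isAfterOpener hv hv').2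
    · omega
  ne u hu v hv hvu := by
    simp only [blockPos, singlePos]
    split_ifs with hvR hv'
    · have := rank_pos hvR; have := (h.mapsTo hu).2; omega
    · intro he
      have := h.injOn (hv'.pred_mem_Icc hv) hu (by exact_mod_cast he)
      omega
    · intro he
      have hWv := apply_lt_of_notMem_runBalls hv hvR hv'
      have hWu : W u = W v + 1 := by omega
      have hWWu := h.involutive u hu
      rcases eq_or_lt_of_le (show W v + 1 ≤ v from hWv) with heq | hlt
      · rw [hWu, heq] at hWWu
        omega
      · have := h.mapsTo_Ioo (h.mapsTo hv) (x := W v + 1)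
          ⟨by omega, by rw [h.involutive v hv]; exact hlt⟩
        rw [← hWu, hWWu, h.involutive v hv] at this
        exact absurd this.2 hvu.not_gt
  exists_of_mem_Ioo v hv j hj := by
    obtain ⟨hvj, hjv⟩ := hj
    simp only [blockPos, singlePos] at hjv
    split_ifs at hjv with hvR hv'
    · exact h.exists_of_mem_runBalls hvR hvj hjv
    · obtain ⟨u, hu, hvu, hWu⟩ := h.exists_of_isAfterOpener hv hv' hvj hjv
      exact ⟨u, hu, Or.inr ⟨hvu, hWu⟩⟩
    · omega

end IsNestedInvolutionOn

def oneLine {n : ℕ} (w : Equiv.Perm (Fin n)) (v : ℕ) : ℕ :=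
  if h : v - 1 < n then w ⟨v - 1, h⟩ + 1 else v

section oneLine

variable {n : ℕ} (w : Equiv.Perm (Fin n))

theorem oneLine_succ (x : Fin n) : oneLine w (x + 1) = w x + 1 := by
  simp [oneLine]

theorem exists_fin_of_mem_Icc {v : ℕ} (hv : v ∈ Icc 1 n) : ∃ x : Fin n, (x : ℕ) + 1 = v :=
  ⟨⟨v - 1, by have := hv.1; have := hv.2; omega⟩, Nat.sub_add_cancel hv.1⟩

theorem oneLine_mem_Icc {v : ℕ} (hv : v ∈ Icc 1 n) : oneLine w v ∈ Icc 1 n := by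
  obtain ⟨x, rfl⟩ := exists_fin_of_mem_Icc hv
  rw [oneLine_succ]
  exact ⟨by omega, (w x).isLt⟩

theorem configOfPerm_eq_configOfPos :
    configOfPerm n w = configOfPos n (fun v => (oneLine w.symm v : ℤ)) := by
  have hinj : InjOn (fun v => (oneLine w.symm v : ℤ)) (Icc 1 n) := by
    intro u hu v hv huv
    obtain ⟨x, rfl⟩ := exists_fin_of_mem_Icc hu
    obtain ⟨y, rfl⟩ := exists_fin_of_mem_Icc hv
    simpa [oneLine_succ, Fin.val_inj] using huv
  funext j
  by_cases hj : 1 ≤ j ∧ j ≤ (n : ℤ)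
  · set x : Fin n := ⟨j.toNat - 1, by omega⟩
    have hconf : configOfPerm n w j = w x + 1 := dif_pos hj
    rw [hconf, eq_comm, configOfPos_eq_iff hinj (v := w x + 1) ⟨by omega, (w x).isLt⟩, oneLine_succ,
      Equiv.symm_apply_apply]
    simp only [x]
    omega
  · rw [show configOfPerm n w j = n + 1 from dif_neg hj, eq_comm, configOfPos_eq_empty_iff]
    rintro ⟨v, hv, hvj : (oneLine w.symm v : ℤ) = j⟩
    have := oneLine_mem_Icc w.symm hv
    simp only [mem_Icc] at this
    omega

end oneLine

theorem isNestedInvolutionOn_oneLine {n : ℕ} {w : Equiv.Perm (Fin n)} (hinv : w * w = 1)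
    (hnest : Nested w) : IsNestedInvolutionOn n (oneLine w) where
  mapsTo v hv := oneLine_mem_Icc w hv
  involutive v hv := by
    obtain ⟨x, rfl⟩ := exists_fin_of_mem_Icc hv
    rw [oneLine_succ, oneLine_succ, ← Equiv.Perm.mul_apply, hinv, Equiv.Perm.one_apply]
  nested u hu v hv hu' hv' huv := by
    obtain ⟨x, rfl⟩ := exists_fin_of_mem_Icc hu
    obtain ⟨y, rfl⟩ := exists_fin_of_mem_Icc hv
    simp only [oneLine_succ, add_lt_add_iff_right] at hu' hv' huv ⊢
    rcases hnest x y (w x) (w y) hu' hv' rfl rfl (Fin.ne_of_lt huv) with ⟨-, h⟩ | ⟨h, -⟩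
    · exact h
    · exact absurd huv (not_lt.2 h.le)

end BoxBall

/-- Every nested involution has steady-state time at most `1`:
`BB^1(w)` is in steady state. -/
theorem nested_involution_steady_state_time_le_one (n : ℕ) (w : Equiv.Perm (Fin n))
    (hinv : w * w = 1) (hnest : Nested w) :
    SteadyState n (BB n 1 (configOfPerm n w)) := by
  have hsymm : w.symm = w := inv_eq_of_mul_eq_one_right hinv
  have hW := BoxBall.isNestedInvolutionOn_oneLine hinv hnest
  rw [BoxBall.configOfPerm_eq_configOfPos, hsymm, BB, Function.iterate_one,
    hW.isMoveStep.BBMove_eq]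
  exact hW.singlesThenBlock.steadyState
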